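/- arXiv:1912.06106 — 2 statements merged into one kernel-verified Lean document; each statement's English description precedes it below -/
import Mathlib

section
/- Let ν ∈ ℝ³ with |ν| = 1 and ν_i ≠ 0 for i = 1, 2, 3, and let M be a symmetric real 9×9 matrix. Then M is an admissible boundary matrix for A_ν if and only if all of the following hold: (a) M₁ and M₃ are positive definite; (b) (A'_ν)ᵀ M₁⁻¹ M₂ and A'_ν M₃⁻¹ (M₂)ᵀ are skew-symmetric; (c) M₃ = (A'_ν)ᵀ M₁⁻¹ A'_ν + (M₂)ᵀ M₁⁻¹ M₂ and M₁ = A'_ν M₃⁻¹ (A'_ν)ᵀ + M₂ M₃⁻¹ (M₂)ᵀ; (d) M₂' = M₂ (A'_ν)⁻¹ A''_ν, M₃' = M₃ (A'_ν)⁻¹ A''_ν, and M₃'' = (A''_ν)ᵀ ((A'_ν)⁻¹)ᵀ M₃ (A'_ν)⁻¹ A''_ν; (e) rank(A_ν + M) = rank(A_ν − M) = 3. -/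
open Matrix

/-- Index type for `9 = 3 + 3 + 3` block vectors/matrices. -/
abbrev I9 := Fin 3 ⊕ (Fin 3 ⊕ Fin 3)

noncomputable def alph (lam mu : ℝ) : ℝ :=
  (2 * Real.sqrt (2 * mu) + Real.sqrt (2 * mu + 3 * lam)) / 3

noncomputable def bet (lam mu : ℝ) : ℝ :=
  (- Real.sqrt (2 * mu) + Real.sqrt (2 * mu + 3 * lam)) / 3

/-- The matrix `A'_ν`. -/
noncomputable def Ap (lam mu : ℝ) (ν : Fin 3 → ℝ) : Matrix (Fin 3) (Fin 3) ℝ :=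
  - !![ν 0 * alph lam mu, ν 0 * bet lam mu, ν 0 * bet lam mu;
       ν 1 * bet lam mu, ν 1 * alph lam mu, ν 1 * bet lam mu;
       ν 2 * bet lam mu, ν 2 * bet lam mu, ν 2 * alph lam mu]

/-- The matrix `A''_ν`. -/
noncomputable def App (mu : ℝ) (ν : Fin 3 → ℝ) : Matrix (Fin 3) (Fin 3) ℝ :=
  (- Real.sqrt mu) • !![ν 1, ν 2, 0; ν 0, 0, ν 2; 0, ν 0, ν 1]

/-- The symmetric `9 × 9` matrix `A_ν` in `3 × 3` block form. -/
noncomputable def Anu (lam mu : ℝ) (ν : Fin 3 → ℝ) : Matrix I9 I9 ℝ :=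
  Matrix.fromBlocks 0 (Matrix.fromCols (Ap lam mu ν) (App mu ν))
    (Matrix.fromRows (Ap lam mu ν)ᵀ (App mu ν)ᵀ) 0

/-- The block `M₁ = M[1..3,1..3]` of a `9 × 9` matrix. -/
def blk₁ (M : Matrix I9 I9 ℝ) : Matrix (Fin 3) (Fin 3) ℝ := M.submatrix Sum.inl Sum.inl

/-- The block `M₂ = M[1..3,4..6]`. -/
def blk₂ (M : Matrix I9 I9 ℝ) : Matrix (Fin 3) (Fin 3) ℝ :=
  M.submatrix Sum.inl (Sum.inr ∘ Sum.inl)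

/-- The block `M₂' = M[1..3,7..9]`. -/
def blk₂' (M : Matrix I9 I9 ℝ) : Matrix (Fin 3) (Fin 3) ℝ :=
  M.submatrix Sum.inl (Sum.inr ∘ Sum.inr)

/-- The block `M₃ = M[4..6,4..6]`. -/
def blk₃ (M : Matrix I9 I9 ℝ) : Matrix (Fin 3) (Fin 3) ℝ :=
  M.submatrix (Sum.inr ∘ Sum.inl) (Sum.inr ∘ Sum.inl)

/-- The block `M₃' = M[4..6,7..9]`. -/
def blk₃' (M : Matrix I9 I9 ℝ) : Matrix (Fin 3) (Fin 3) ℝ :=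
  M.submatrix (Sum.inr ∘ Sum.inl) (Sum.inr ∘ Sum.inr)

/-- The block `M₃'' = M[7..9,7..9]`. -/
def blk₃'' (M : Matrix I9 I9 ℝ) : Matrix (Fin 3) (Fin 3) ℝ :=
  M.submatrix (Sum.inr ∘ Sum.inr) (Sum.inr ∘ Sum.inr)

/-- `M` is an admissible boundary matrix for `A`: `M` is symmetric positive semidefinite,
`Ker A ⊆ Ker M`, and `Ker (A - M) + Ker (A + M) = ℝ⁹`. -/
def IsAdmissible (A M : Matrix I9 I9 ℝ) : Prop :=
  M.IsSymm ∧ M.PosSemidef ∧ (∀ x : I9 → ℝ, A.mulVec x = 0 → M.mulVec x = 0) ∧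
    LinearMap.ker (A - M).mulVecLin ⊔ LinearMap.ker (A + M).mulVecLin = ⊤

/-!
Write `A''_ν = A'_ν K` with `K = (A'_ν)⁻¹ A''_ν` (`A'_ν` is invertible since all `ν i ≠ 0`).
Then `A_ν = Pᵀ B P` with `P (u, v, w) = (u, v + K w)` and `B = [[0, A'_ν], [(A'_ν)ᵀ, 0]]`
invertible, so `Ker A_ν = Ker P`. A symmetric `M` with `Ker A_ν ⊆ Ker M` is therefore
`M = Pᵀ N P`, where `N = [[M₁, M₂], [M₂ᵀ, M₃]]`: this is (d). Admissibility of `M` becomes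
`N ⪰ 0` and `Ker (N - B) + Ker (N + B) = ℝ⁶`.

As `B` is invertible, that decomposition forces `N ≻ 0`. With `M₁ ≻ 0`, the kernel of
`[[M₁, X], [Xᵀ, M₃]]` is the graph of `-M₁⁻¹ X` over the kernel of the Schur complement
`M₃ - Xᵀ M₁⁻¹ X`, and for `X = M₂ ± A'_ν` the two graphs span `ℝ⁶` exactly when both Schur
complements vanish. Adding and subtracting the two identities gives (b) and (c); a block
matrix with invertible corner and vanishing Schur complement has rank `3`, which is (e).
-/

theorem Submodule.comap_sup_comap_eq_top_iff {R M M₂ : Type*} [Ring R] [AddCommGroup M]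
    [AddCommGroup M₂] [Module R M] [Module R M₂] {f : M →ₗ[R] M₂}
    (hf : Function.Surjective f) {p q : Submodule R M₂} :
    p.comap f ⊔ q.comap f = ⊤ ↔ p ⊔ q = ⊤ := by
  constructor
  · intro h
    rw [← map_comap_eq_of_surjective hf p, ← map_comap_eq_of_surjective hf q, ← map_sup, h,
      map_top, LinearMap.range_eq_top.2 hf]
  · intro h
    rw [← sup_eq_left.2 ((LinearMap.ker_le_comap f).trans le_sup_left), ← comap_map_eq, map_sup,
      map_comap_eq_of_surjective hf, map_comap_eq_of_surjective hf, h, comap_top]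

namespace Matrix

section Schur

variable {n K : Type*} [Fintype n] [DecidableEq n] [Field K]

theorem fromBlocks_mulVec_sumElim_eq_zero_iff {m : Type*} [Fintype m]
    {W : Matrix n n K} {X : Matrix n m K} {Y : Matrix m n K} {Z : Matrix m m K}
    (hW : IsUnit W.det) (u : n → K) (v : m → K) :
    fromBlocks W X Y Z *ᵥ Sum.elim u v = 0 ↔
      u = -((W⁻¹ * X) *ᵥ v) ∧ (Z - Y * W⁻¹ * X) *ᵥ v = 0 := by
  rw [fromBlocks_mulVec, Sum.elim_comp_inl, Sum.elim_comp_inr, ← Sum.elim_zero_zero,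
    Sum.elim_eq_iff]
  have hWu : W *ᵥ u + X *ᵥ v = W *ᵥ (u + (W⁻¹ * X) *ᵥ v) := by
    rw [mulVec_add, mulVec_mulVec, ← Matrix.mul_assoc, mul_nonsing_inv _ hW, Matrix.one_mul]
  rw [hWu, (mulVec_injective_of_isUnit ((isUnit_iff_isUnit_det W).2 hW)).eq_iff' (mulVec_zero W),
    add_eq_zero_iff_eq_neg]
  refine and_congr_right fun hu => ?_
  rw [hu, mulVec_neg, mulVec_mulVec, sub_mulVec, ← Matrix.mul_assoc, neg_add_eq_sub]

theorem schur_eq_of_ker_sup_ker_eq_top {N₁ N₃ X Y X' Y' : Matrix n n K}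
    (h₁ : IsUnit N₁.det) (hXY : IsUnit (Y - X).det)
    (h : LinearMap.ker (fromBlocks N₁ X X' N₃).mulVecLin ⊔
      LinearMap.ker (fromBlocks N₁ Y Y' N₃).mulVecLin = ⊤) :
    N₃ = X' * N₁⁻¹ * X ∧ N₃ = Y' * N₁⁻¹ * Y := by
  suffices hw : ∀ w, (N₃ - X' * N₁⁻¹ * X) *ᵥ w = 0 ∧ (N₃ - Y' * N₁⁻¹ * Y) *ᵥ w = 0 by
    simp only [← sub_eq_zero (a := N₃), ext_iff_mulVec, zero_mulVec]
    exact ⟨fun w => (hw w).1, fun w => (hw w).2⟩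
  intro w
  -- The two parts of `(N₁⁻¹ (Y - X) w, 0)` have lower halves `v` and `-v`, and then the upper
  -- halves add up to `N₁⁻¹ (Y - X) v`, so `v = w` lies in both Schur kernels.
  obtain ⟨a, ha, b, hb, hab⟩ := Submodule.mem_sup.1
    (h ▸ Submodule.mem_top : Sum.elim ((N₁⁻¹ * (Y - X)) *ᵥ w) 0 ∈ _)
  rw [← Sum.elim_comp_inl_inr a, LinearMap.mem_ker, mulVecLin_apply,
    fromBlocks_mulVec_sumElim_eq_zero_iff h₁] at ha
  rw [← Sum.elim_comp_inl_inr b, LinearMap.mem_ker, mulVecLin_apply,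
    fromBlocks_mulVec_sumElim_eq_zero_iff h₁] at hb
  have hinl : a ∘ Sum.inl + b ∘ Sum.inl = (N₁⁻¹ * (Y - X)) *ᵥ w :=
    funext fun i => by simpa using congrFun hab (Sum.inl i)
  have hb₂ : b ∘ Sum.inr = -(a ∘ Sum.inr) :=
    eq_neg_of_add_eq_zero_right (funext fun i => by simpa using congrFun hab (Sum.inr i))
  have hinj : Function.Injective (N₁⁻¹ * (Y - X)).mulVec := by
    refine mulVec_injective_of_isUnit ?_
    rw [isUnit_iff_isUnit_det, det_mul]
    exact (isUnit_nonsing_inv_det _ h₁).mul hXY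
  have hw : a ∘ Sum.inr = w := hinj <| by
    rw [← hinl, ha.1, hb.1, hb₂, mulVec_neg, neg_neg, Matrix.mul_sub, sub_mulVec]
    abel
  refine ⟨hw ▸ ha.2, ?_⟩
  simpa only [hb₂, hw, mulVec_neg, neg_eq_zero] using hb.2

theorem ker_sup_ker_eq_top_of_schur_eq {N₁ N₃ X Y X' Y' : Matrix n n K}
    (h₁ : IsUnit N₁.det) (hXY : IsUnit (Y - X).det)
    (hX : N₃ = X' * N₁⁻¹ * X) (hY : N₃ = Y' * N₁⁻¹ * Y) :
    LinearMap.ker (fromBlocks N₁ X X' N₃).mulVecLin ⊔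
      LinearMap.ker (fromBlocks N₁ Y Y' N₃).mulVecLin = ⊤ := by
  have graph_mem {Z Z' : Matrix n n K} (hZ : N₃ = Z' * N₁⁻¹ * Z) (v : n → K) :
      Sum.elim (-((N₁⁻¹ * Z) *ᵥ v)) v ∈ LinearMap.ker (fromBlocks N₁ Z Z' N₃).mulVecLin := by
    rw [LinearMap.mem_ker, mulVecLin_apply, fromBlocks_mulVec_sumElim_eq_zero_iff h₁, ← hZ,
      sub_self, zero_mulVec]
    exact ⟨rfl, rfl⟩
  refine eq_top_iff.2 fun z _ => ?_
  set u := z ∘ Sum.inl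
  set w := z ∘ Sum.inr
  set vY := (Y - X)⁻¹ *ᵥ (-(N₁ *ᵥ u) - X *ᵥ w)
  have hvY : (Y - X) *ᵥ vY = -(N₁ *ᵥ u) - X *ᵥ w := by
    rw [mulVec_mulVec, mul_nonsing_inv _ hXY, one_mulVec]
  refine Submodule.mem_sup.2 ⟨_, graph_mem hX (w - vY), _, graph_mem hY vY, ?_⟩
  rw [← Sum.elim_comp_inl_inr z, ← Sum.elim_add_add, sub_add_cancel]
  congr 1
  calc -((N₁⁻¹ * X) *ᵥ (w - vY)) + -((N₁⁻¹ * Y) *ᵥ vY)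
      = -(N₁⁻¹ *ᵥ (X *ᵥ w + (Y - X) *ᵥ vY)) := by
        simp only [← mulVec_mulVec, mulVec_sub, sub_mulVec, mulVec_add]; abel
    _ = u := by
      rw [hvY, add_sub_cancel, mulVec_neg, neg_neg, mulVec_mulVec, nonsing_inv_mul _ h₁,
        one_mulVec]

theorem eq_mul_inv_mul_transpose_of_eq {N₁ N₃ X : Matrix n n K} (h₁ : IsUnit N₁.det)
    (h₃ : IsUnit N₃.det) (h : N₃ = Xᵀ * N₁⁻¹ * X) : N₁ = X * N₃⁻¹ * Xᵀ := by
  have hX : IsUnit X.det := by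
    rw [h, det_mul] at h₃
    exact isUnit_of_mul_isUnit_right h₃
  have hXt : IsUnit Xᵀ.det := by rwa [det_transpose]
  rw [h, mul_inv_rev, mul_inv_rev, nonsing_inv_nonsing_inv _ h₁, ← Matrix.mul_assoc,
    ← Matrix.mul_assoc, mul_nonsing_inv _ hX, Matrix.one_mul, Matrix.mul_assoc,
    nonsing_inv_mul _ hXt, Matrix.mul_one]

theorem eq_conj_add_and_eq_conj_sub_iff [CharZero K] {S W X Y : Matrix n n K} (hW : Wᵀ = W) :
    (S = (Y + X)ᵀ * W * (Y + X) ∧ S = (Y - X)ᵀ * W * (Y - X)) ↔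
      (Xᵀ * W * Y)ᵀ = -(Xᵀ * W * Y) ∧ S = Xᵀ * W * X + Yᵀ * W * Y := by
  have hT : (Xᵀ * W * Y)ᵀ = Yᵀ * W * X := by
    rw [transpose_mul, transpose_mul, transpose_transpose, hW, Matrix.mul_assoc]
  have hadd : (Y + X)ᵀ * W * (Y + X) =
      Xᵀ * W * X + Yᵀ * W * Y + (Yᵀ * W * X + Xᵀ * W * Y) := by
    rw [transpose_add]; noncomm_ring
  have hsub : (Y - X)ᵀ * W * (Y - X) =
      Xᵀ * W * X + Yᵀ * W * Y - (Yᵀ * W * X + Xᵀ * W * Y) := by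
    rw [transpose_sub]; noncomm_ring
  rw [hadd, hsub, hT, eq_neg_iff_add_eq_zero]
  generalize Xᵀ * W * X + Yᵀ * W * Y = A
  generalize Yᵀ * W * X + Xᵀ * W * Y = D
  constructor
  · rintro ⟨hp, hm⟩
    have h2D : (2 : K) • D = 0 := by
      rw [two_smul]
      calc D + D = (A + D) - (A - D) := by abel
        _ = 0 := by rw [← hp, ← hm, sub_self]
    have hD := (smul_eq_zero.1 h2D).resolve_left two_ne_zero
    exact ⟨hD, by rw [hp, hD, add_zero]⟩
  · rintro ⟨hD, hS⟩
    rw [hD, add_zero, sub_zero]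
    exact ⟨hS, hS⟩

omit [DecidableEq n] in
theorem rank_neg {m : Type*} (A : Matrix m n K) : (-A).rank = A.rank := by
  rw [← neg_one_smul K A, rank_smul_of_mem_nonZeroDivisors]
  exact mem_nonZeroDivisors_of_ne_zero (neg_ne_zero.2 one_ne_zero)

end Schur

section Conjugation

variable {ι κ K : Type*} [Fintype ι] [Fintype κ] [DecidableEq κ] [Field K]
  {P : Matrix κ ι K} {Q : Matrix ι κ K}

theorem ker_transpose_mul_mul (hPQ : P * Q = 1) (X : Matrix κ κ K) :
    LinearMap.ker (Pᵀ * X * P).mulVecLin = (LinearMap.ker X.mulVecLin).comap P.mulVecLin := by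
  ext x
  simp only [LinearMap.mem_ker, Submodule.mem_comap, mulVecLin_apply, ← mulVec_mulVec]
  refine ⟨fun h => ?_, fun h => by rw [h, mulVec_zero]⟩
  have h' := congrArg (Qᵀ *ᵥ ·) h
  rwa [mulVec_mulVec, ← transpose_mul, hPQ, transpose_one, one_mulVec, mulVec_zero] at h'

theorem rank_transpose_mul_mul (hPQ : P * Q = 1) (X : Matrix κ κ K) :
    (Pᵀ * X * P).rank = X.rank := by
  refine le_antisymm ((rank_mul_le_left _ _).trans (rank_mul_le_right _ _)) ?_
  have hX : Qᵀ * (Pᵀ * X * P) * Q = X := by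
    calc Qᵀ * (Pᵀ * X * P) * Q = (P * Q)ᵀ * X * (P * Q) := by
          simp only [transpose_mul, Matrix.mul_assoc]
      _ = X := by rw [hPQ, transpose_one, Matrix.one_mul, Matrix.mul_one]
  calc X.rank = (Qᵀ * (Pᵀ * X * P) * Q).rank := by rw [hX]
    _ ≤ (Pᵀ * X * P).rank := (rank_mul_le_left _ _).trans (rank_mul_le_right _ _)

theorem eq_transpose_mul_mul_of_ker_le {M : Matrix ι ι K} (hM : Mᵀ = M) (hPQ : P * Q = 1)
    (h : ∀ x, P *ᵥ x = 0 → M *ᵥ x = 0) : M = Pᵀ * (Qᵀ * M * Q) * P := by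
  have hMQP : M * Q * P = M := by
    refine ext_iff_mulVec.2 fun x => ?_
    have hx : P *ᵥ (x - Q *ᵥ (P *ᵥ x)) = 0 := by
      rw [mulVec_sub, mulVec_mulVec (P *ᵥ x) P Q, hPQ, one_mulVec, sub_self]
    have hMx := h _ hx
    rw [mulVec_sub, sub_eq_zero] at hMx
    rw [← mulVec_mulVec, ← mulVec_mulVec, ← hMx]
  have hPQM : Pᵀ * Qᵀ * M = M := by
    have h' := congrArg transpose hMQP
    rwa [transpose_mul, transpose_mul, hM, ← Matrix.mul_assoc] at h'
  conv_lhs => rw [← hMQP, ← hPQM]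
  simp only [Matrix.mul_assoc]

theorem ker_le_iff_eq_transpose_mul_mul {A M : Matrix ι ι K} {B : Matrix κ κ K}
    (hA : A = Pᵀ * B * P) (hB : Function.Injective B.mulVec) (hPQ : P * Q = 1) (hM : Mᵀ = M) :
    (∀ x, A *ᵥ x = 0 → M *ᵥ x = 0) ↔ M = Pᵀ * (Qᵀ * M * Q) * P := by
  have hkerA (x : ι → K) : A *ᵥ x = 0 ↔ P *ᵥ x = 0 := by
    rw [← mulVecLin_apply, ← LinearMap.mem_ker, hA, ker_transpose_mul_mul hPQ,
      Submodule.mem_comap, LinearMap.mem_ker, mulVecLin_apply, mulVecLin_apply,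
      hB.eq_iff' (mulVec_zero B)]
  simp only [hkerA]
  refine ⟨eq_transpose_mul_mul_of_ker_le hM hPQ, fun h x hx => ?_⟩
  rw [h, ← mulVec_mulVec, hx, mulVec_zero]

theorem ker_sub_sup_ker_add_eq_top_iff {A M : Matrix ι ι K} {B N : Matrix κ κ K}
    (hA : A = Pᵀ * B * P) (hM : M = Pᵀ * N * P) (hPQ : P * Q = 1) :
    LinearMap.ker (A - M).mulVecLin ⊔ LinearMap.ker (A + M).mulVecLin = ⊤ ↔
      LinearMap.ker (N - B).mulVecLin ⊔ LinearMap.ker (N + B).mulVecLin = ⊤ := by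
  have hP : Function.Surjective P.mulVecLin := fun y => ⟨Q *ᵥ y, by
    rw [mulVecLin_apply, mulVec_mulVec, hPQ, one_mulVec]⟩
  have hBN : LinearMap.ker (B - N).mulVecLin = LinearMap.ker (N - B).mulVecLin := by
    ext x
    simp only [LinearMap.mem_ker, mulVecLin_apply, sub_mulVec, sub_eq_zero, eq_comm]
  rw [hA, hM, ← Matrix.sub_mul, ← Matrix.mul_sub, ← Matrix.add_mul, ← Matrix.mul_add,
    ker_transpose_mul_mul hPQ, ker_transpose_mul_mul hPQ,
    Submodule.comap_sup_comap_eq_top_iff hP, hBN, add_comm B]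

theorem rank_add_and_rank_sub_of_eq_transpose_mul_mul {A M : Matrix ι ι K}
    {B N : Matrix κ κ K} (hA : A = Pᵀ * B * P) (hM : M = Pᵀ * N * P) (hPQ : P * Q = 1) :
    (A + M).rank = (N + B).rank ∧ (A - M).rank = (N - B).rank := by
  rw [hA, hM, ← Matrix.add_mul, ← Matrix.mul_add, ← Matrix.sub_mul, ← Matrix.mul_sub,
    rank_transpose_mul_mul hPQ, rank_transpose_mul_mul hPQ, add_comm, ← neg_sub, rank_neg]
  exact ⟨rfl, rfl⟩

end Conjugation

theorem posDef_of_ker_sub_sup_ker_add_eq_top {ι : Type*} [Fintype ι] [DecidableEq ι]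
    {N B : Matrix ι ι ℝ} (hN : N.PosSemidef) (hB : Function.Injective B.mulVec)
    (h : LinearMap.ker (N - B).mulVecLin ⊔ LinearMap.ker (N + B).mulVecLin = ⊤) : N.PosDef := by
  refine hN.posDef_iff_isUnit.2 (mulVec_injective_iff_isUnit.1 ?_)
  refine (injective_iff_map_eq_zero N.mulVecLin).2 fun x hx => ?_
  -- For `x = y₁ + y₂` with `N y₁ = B y₁`, `N y₂ = -B y₂`, `N x = 0` gives `B y₁ = B y₂`,
  -- so `y₁ = y₂` and `B y₁ = -B y₁`.
  obtain ⟨y₁, hy₁, y₂, hy₂, rfl⟩ := Submodule.mem_sup.1 (h ▸ Submodule.mem_top : x ∈ _)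
  rw [LinearMap.mem_ker, mulVecLin_apply, sub_mulVec, sub_eq_zero] at hy₁
  rw [LinearMap.mem_ker, mulVecLin_apply, add_mulVec, add_eq_zero_iff_eq_neg] at hy₂
  rw [mulVecLin_apply, mulVec_add, hy₁, hy₂, add_neg_eq_zero] at hx
  obtain rfl := hB hx
  have h2B : (2 : ℝ) • (B *ᵥ y₁) = 0 := by
    rw [two_smul, ← sub_neg_eq_add, ← hy₂, hy₁, sub_self]
  have hBy : B *ᵥ y₁ = B *ᵥ 0 := by
    rw [mulVec_zero]
    exact (smul_eq_zero.1 h2B).resolve_left two_ne_zero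
  rw [hB hBy, add_zero]

section SymmBlocks

variable {n m R : Type*} [CommRing R]

def symmBlocks (N₁ N₂ N₃ : Matrix n n R) : Matrix (n ⊕ n) (n ⊕ n) R := fromBlocks N₁ N₂ N₂ᵀ N₃

variable [DecidableEq n]

def blockContraction (K : Matrix n m R) : Matrix (n ⊕ n) (n ⊕ (n ⊕ m)) R :=
  fromBlocks 1 0 0 (fromCols 1 K)

def blockInclusion : Matrix (n ⊕ (n ⊕ m)) (n ⊕ n) R := fromBlocks 1 0 0 (fromRows 1 0)

omit [DecidableEq n] in
theorem symmBlocks_add_symmBlocks_zero (N₁ N₂ N₃ C : Matrix n n R) :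
    symmBlocks N₁ N₂ N₃ + symmBlocks 0 C 0 = symmBlocks N₁ (N₂ + C) N₃ := by
  simp only [symmBlocks, fromBlocks_add, transpose_add, add_zero]

omit [DecidableEq n] in
theorem symmBlocks_sub_symmBlocks_zero (N₁ N₂ N₃ C : Matrix n n R) :
    symmBlocks N₁ N₂ N₃ - symmBlocks 0 C 0 = symmBlocks N₁ (N₂ - C) N₃ := by
  simp only [symmBlocks, sub_eq_add_neg, fromBlocks_neg, fromBlocks_add, transpose_add,
    transpose_neg, neg_zero, add_zero]

variable [Fintype n]

theorem blockContraction_mul_blockInclusion [Fintype m] (K : Matrix n m R) :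
    blockContraction K * (blockInclusion : Matrix (n ⊕ (n ⊕ m)) (n ⊕ n) R) = 1 := by
  simp [blockContraction, blockInclusion, fromBlocks_multiply, fromCols_mul_fromRows,
    ← fromBlocks_one]

theorem blockContraction_transpose_mul_mul (K : Matrix n m R) (N₁ N₂ N₂' N₃ : Matrix n n R) :
    (blockContraction K)ᵀ * fromBlocks N₁ N₂ N₂' N₃ * blockContraction K =
      fromBlocks N₁ (fromCols N₂ (N₂ * K)) (fromRows N₂' (Kᵀ * N₂'))
        (fromBlocks N₃ (N₃ * K) (Kᵀ * N₃) (Kᵀ * N₃ * K)) := by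
  simp [blockContraction, fromBlocks_transpose, transpose_fromCols, fromBlocks_multiply,
    mul_fromCols, fromRows_mul, Matrix.mul_assoc, fromCols_fromRows_eq_fromBlocks]

theorem injective_mulVec_symmBlocks_zero {K : Type*} [Field K] {C : Matrix n n K}
    (hC : IsUnit C.det) : Function.Injective (symmBlocks 0 C 0).mulVec := by
  refine mulVec_injective_iff_isUnit.2 ((isUnit_iff_isUnit_det _).2
    (isUnit_det_of_right_inverse (B := symmBlocks 0 C⁻¹ᵀ 0) ?_))
  simp [symmBlocks, fromBlocks_multiply, mul_nonsing_inv _ hC, ← transpose_mul,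
    nonsing_inv_mul _ hC, ← fromBlocks_one]

theorem rank_symmBlocks_of_eq {K : Type*} [Field K] {N₁ N₃ X : Matrix n n K}
    (h₁ : IsUnit N₁.det) (h : N₃ = Xᵀ * N₁⁻¹ * X) :
    (symmBlocks N₁ X N₃).rank = Fintype.card n := by
  have hfac : symmBlocks N₁ X N₃ = fromRows 1 (Xᵀ * N₁⁻¹) * (N₁ * fromCols 1 (N₁⁻¹ * X)) := by
    rw [symmBlocks, h, mul_fromCols, fromRows_mul_fromCols, Matrix.mul_one,
      mul_nonsing_inv_cancel_left _ _ h₁, Matrix.one_mul, Matrix.one_mul,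
      nonsing_inv_mul_cancel_right _ _ h₁, Matrix.mul_assoc]
  refine le_antisymm (hfac ▸ (rank_mul_le_left _ _).trans (rank_le_card_width _)) ?_
  calc Fintype.card n = N₁.rank := (rank_of_isUnit N₁ ((isUnit_iff_isUnit_det N₁).2 h₁)).symm
    _ ≤ _ := rank_submatrix_le (symmBlocks N₁ X N₃) Sum.inl Sum.inl

end SymmBlocks

section PosDef

variable {n : Type*}

theorem PosDef.transpose_eq {N : Matrix n n ℝ} (h : N.PosDef) : Nᵀ = N :=
  (isHermitian_iff_isSymm.1 h.1).eq

theorem PosDef.symmBlocks {N₁ N₂ N₃ : Matrix n n ℝ} (h : (symmBlocks N₁ N₂ N₃).PosDef) :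
    N₁.PosDef ∧ N₃.PosDef :=
  ⟨h.submatrix Sum.inl_injective, h.submatrix Sum.inr_injective⟩

variable [Fintype n] [DecidableEq n]

theorem posSemidef_symmBlocks {N₁ N₂ N₃ : Matrix n n ℝ} (h₁ : N₁.PosDef)
    (h : (N₃ - N₂ᵀ * N₁⁻¹ * N₂).PosSemidef) : (symmBlocks N₁ N₂ N₃).PosSemidef := by
  have := h₁.isUnit.invertible
  rwa [symmBlocks, ← conjTranspose_eq_transpose_of_trivial, PosDef.fromBlocks₁₁ _ _ h₁,
    conjTranspose_eq_transpose_of_trivial]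

theorem posSemidef_and_ker_sup_eq_top_iff {N₁ N₂ N₃ C : Matrix n n ℝ} (hC : IsUnit C.det) :
    (symmBlocks N₁ N₂ N₃).PosSemidef ∧
        LinearMap.ker (symmBlocks N₁ N₂ N₃ - symmBlocks 0 C 0).mulVecLin ⊔
          LinearMap.ker (symmBlocks N₁ N₂ N₃ + symmBlocks 0 C 0).mulVecLin = ⊤ ↔
      N₁.PosDef ∧ N₃.PosDef ∧
        (N₃ = (N₂ + C)ᵀ * N₁⁻¹ * (N₂ + C) ∧ N₃ = (N₂ - C)ᵀ * N₁⁻¹ * (N₂ - C)) := by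
  have h2C : IsUnit ((N₂ + C) - (N₂ - C)).det := by
    rw [add_sub_sub_cancel, ← two_smul ℝ, det_smul]
    exact ((isUnit_iff_ne_zero.2 two_ne_zero).pow _).mul hC
  constructor
  · rintro ⟨hN, hsup⟩
    obtain ⟨h₁, h₃⟩ := (posDef_of_ker_sub_sup_ker_add_eq_top hN
      (injective_mulVec_symmBlocks_zero hC) hsup).symmBlocks
    rw [symmBlocks_sub_symmBlocks_zero, symmBlocks_add_symmBlocks_zero] at hsup
    obtain ⟨hS_sub, hS_add⟩ :=
      schur_eq_of_ker_sup_ker_eq_top ((isUnit_iff_isUnit_det _).1 h₁.isUnit) h2C hsup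
    exact ⟨h₁, h₃, hS_add, hS_sub⟩
  · rintro ⟨h₁, -, hS_add, hS_sub⟩
    refine ⟨posSemidef_symmBlocks h₁ ?_, ?_⟩
    · rw [((eq_conj_add_and_eq_conj_sub_iff h₁.inv.transpose_eq).1 ⟨hS_add, hS_sub⟩).2,
        add_sub_cancel_right]
      simpa only [conjTranspose_eq_transpose_of_trivial] using
        h₁.inv.posSemidef.conjTranspose_mul_mul_same C
    · rw [symmBlocks_sub_symmBlocks_zero, symmBlocks_add_symmBlocks_zero]
      exact ker_sup_ker_eq_top_of_schur_eq ((isUnit_iff_isUnit_det _).1 h₁.isUnit) h2C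
        hS_sub hS_add

theorem eq_conj_add_and_eq_conj_sub_iff_of_posDef {N₁ N₂ N₃ C : Matrix n n ℝ}
    (h₁ : N₁.PosDef) (h₃ : N₃.PosDef) :
    (N₃ = (N₂ + C)ᵀ * N₁⁻¹ * (N₂ + C) ∧ N₃ = (N₂ - C)ᵀ * N₁⁻¹ * (N₂ - C)) ↔
      ((Cᵀ * N₁⁻¹ * N₂)ᵀ = -(Cᵀ * N₁⁻¹ * N₂) ∧ (C * N₃⁻¹ * N₂ᵀ)ᵀ = -(C * N₃⁻¹ * N₂ᵀ)) ∧
        (N₃ = Cᵀ * N₁⁻¹ * C + N₂ᵀ * N₁⁻¹ * N₂ ∧ N₁ = C * N₃⁻¹ * Cᵀ + N₂ * N₃⁻¹ * N₂ᵀ) := by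
  have flip {X : Matrix n n ℝ} (hX : N₃ = Xᵀ * N₁⁻¹ * X) : N₁ = Xᵀᵀ * N₃⁻¹ * Xᵀ := by
    rw [transpose_transpose]
    exact eq_mul_inv_mul_transpose_of_eq ((isUnit_iff_isUnit_det _).1 h₁.isUnit)
      ((isUnit_iff_isUnit_det _).1 h₃.isUnit) hX
  constructor
  · intro h
    obtain ⟨hb₁, hc₁⟩ := (eq_conj_add_and_eq_conj_sub_iff h₁.inv.transpose_eq).1 h
    have h' := (eq_conj_add_and_eq_conj_sub_iff (S := N₁) (X := Cᵀ) (Y := N₂ᵀ)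
      h₃.inv.transpose_eq).1
      ⟨by rw [← transpose_add]; exact flip h.1, by rw [← transpose_sub]; exact flip h.2⟩
    simp only [transpose_transpose] at h'
    exact ⟨⟨hb₁, h'.1⟩, hc₁, h'.2⟩
  · rintro ⟨⟨hb₁, -⟩, hc₁, -⟩
    exact (eq_conj_add_and_eq_conj_sub_iff h₁.inv.transpose_eq).2 ⟨hb₁, hc₁⟩

end PosDef

end Matrix

section Lame

variable {lam mu : ℝ} {ν : Fin 3 → ℝ}

theorem det_Ap (hmu : 0 ≤ mu) :
    (Ap lam mu ν).det = -(2 * mu * √(2 * mu + 3 * lam) * (ν 0 * ν 1 * ν 2)) := by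
  have hα : alph lam mu - bet lam mu = √(2 * mu) := by unfold alph bet; ring
  have hβ : alph lam mu + 2 * bet lam mu = √(2 * mu + 3 * lam) := by unfold alph bet; ring
  calc (Ap lam mu ν).det
      = -((alph lam mu - bet lam mu) ^ 2 * (alph lam mu + 2 * bet lam mu) *
          (ν 0 * ν 1 * ν 2)) := by
        simp only [Ap, neg_of, neg_cons, neg_empty, det_fin_three, of_apply, cons_val',
          cons_val_zero, cons_val_fin_one, cons_val_one, cons_val, mul_neg, neg_mul, neg_neg,
          sub_neg_eq_add]
        ring
    _ = _ := by rw [hα, hβ, Real.sq_sqrt (by linarith)]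

theorem isUnit_det_Ap (hmu : 0 < mu) (hlm : 0 < 2 * mu + 3 * lam) (hν : ∀ i, ν i ≠ 0) :
    IsUnit (Ap lam mu ν).det := by
  rw [det_Ap hmu.le, isUnit_iff_ne_zero, neg_ne_zero]
  have := Real.sqrt_pos.2 hlm
  exact mul_ne_zero (by positivity) (mul_ne_zero (mul_ne_zero (hν 0) (hν 1)) (hν 2))

theorem Anu_eq_transpose_mul_mul (hC : IsUnit (Ap lam mu ν).det) :
    Anu lam mu ν = (blockContraction ((Ap lam mu ν)⁻¹ * App mu ν))ᵀ *
      symmBlocks 0 (Ap lam mu ν) 0 * blockContraction ((Ap lam mu ν)⁻¹ * App mu ν) := by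
  rw [symmBlocks, blockContraction_transpose_mul_mul, mul_nonsing_inv_cancel_left _ _ hC,
    ← transpose_mul, mul_nonsing_inv_cancel_left _ _ hC]
  simp [Anu]

variable {M : Matrix I9 I9 ℝ}

theorem eq_fromBlocks_blk (hM : M.IsSymm) :
    M = fromBlocks (blk₁ M) (fromCols (blk₂ M) (blk₂' M)) (fromRows (blk₂ M)ᵀ (blk₂' M)ᵀ)
        (fromBlocks (blk₃ M) (blk₃' M) (blk₃' M)ᵀ (blk₃'' M)) := by
  ext (i | i | i) (j | j | j) <;>
    simp [blk₁, blk₂, blk₂', blk₃, blk₃', blk₃'', hM.apply]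

theorem blockInclusion_transpose_mul_mul (hM : M.IsSymm) :
    (blockInclusion : Matrix I9 (Fin 3 ⊕ Fin 3) ℝ)ᵀ * M *
        (blockInclusion : Matrix I9 (Fin 3 ⊕ Fin 3) ℝ) =
      symmBlocks (blk₁ M) (blk₂ M) (blk₃ M) := by
  conv_lhs => rw [eq_fromBlocks_blk hM]
  rw [Matrix.mul_assoc]
  simp [blockInclusion, symmBlocks, fromBlocks_transpose, transpose_fromRows,
    fromBlocks_multiply, fromCols_mul_fromRows, fromBlocks_mul_fromRows]

theorem eq_blockContraction_transpose_mul_mul_iff (hM : M.IsSymm) (C D : Matrix (Fin 3) (Fin 3) ℝ) :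
    M = (blockContraction (C⁻¹ * D))ᵀ * symmBlocks (blk₁ M) (blk₂ M) (blk₃ M) *
        blockContraction (C⁻¹ * D) ↔
      blk₂' M = blk₂ M * C⁻¹ * D ∧ blk₃' M = blk₃ M * C⁻¹ * D ∧
        blk₃'' M = Dᵀ * C⁻¹ᵀ * blk₃ M * C⁻¹ * D := by
  have h₃ : (blk₃ M)ᵀ = blk₃ M := by ext i j; exact hM.apply _ _
  nth_rw 1 [eq_fromBlocks_blk hM]
  rw [symmBlocks, blockContraction_transpose_mul_mul, fromBlocks_inj, fromCols_inj.eq_iff,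
    fromRows_inj.eq_iff, fromBlocks_inj]
  simp only [true_and, transpose_mul, Matrix.mul_assoc]
  constructor
  · rintro ⟨h₂', -, h₃', -, h₃''⟩
    exact ⟨h₂', h₃', h₃''⟩
  · rintro ⟨h₂', h₃', h₃''⟩
    refine ⟨h₂', ?_, h₃', ?_, h₃''⟩ <;> simp only [h₂', h₃', transpose_mul, h₃, Matrix.mul_assoc]

theorem isAdmissible_Anu_iff (hC : IsUnit (Ap lam mu ν).det) (hM : M.IsSymm) :
    IsAdmissible (Anu lam mu ν) M ↔
      M = (blockContraction ((Ap lam mu ν)⁻¹ * App mu ν))ᵀ *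
          symmBlocks (blk₁ M) (blk₂ M) (blk₃ M) * blockContraction ((Ap lam mu ν)⁻¹ * App mu ν) ∧
        (symmBlocks (blk₁ M) (blk₂ M) (blk₃ M)).PosSemidef ∧
        LinearMap.ker
            (symmBlocks (blk₁ M) (blk₂ M) (blk₃ M) - symmBlocks 0 (Ap lam mu ν) 0).mulVecLin ⊔
          LinearMap.ker
            (symmBlocks (blk₁ M) (blk₂ M) (blk₃ M) + symmBlocks 0 (Ap lam mu ν) 0).mulVecLin =
          ⊤ := by
  have hPQ := blockContraction_mul_blockInclusion ((Ap lam mu ν)⁻¹ * App mu ν)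
  have hA := Anu_eq_transpose_mul_mul hC
  have hQMQ := blockInclusion_transpose_mul_mul hM
  rw [IsAdmissible, and_iff_right hM,
    ker_le_iff_eq_transpose_mul_mul hA (injective_mulVec_symmBlocks_zero hC) hPQ hM, hQMQ]
  constructor
  · rintro ⟨hpsd, hMN, hsup⟩
    refine ⟨hMN, ?_, (ker_sub_sup_ker_add_eq_top_iff hA hMN hPQ).1 hsup⟩
    simpa only [conjTranspose_eq_transpose_of_trivial, hQMQ] using
      hpsd.conjTranspose_mul_mul_same blockInclusion
  · rintro ⟨hMN, hN, hsup⟩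
    refine ⟨?_, hMN, (ker_sub_sup_ker_add_eq_top_iff hA hMN hPQ).2 hsup⟩
    rw [hMN]
    simpa only [conjTranspose_eq_transpose_of_trivial] using
      hN.conjTranspose_mul_mul_same (blockContraction ((Ap lam mu ν)⁻¹ * App mu ν))

theorem rank_Anu_add_and_sub (hC : IsUnit (Ap lam mu ν).det)
    (hM : M = (blockContraction ((Ap lam mu ν)⁻¹ * App mu ν))ᵀ *
      symmBlocks (blk₁ M) (blk₂ M) (blk₃ M) * blockContraction ((Ap lam mu ν)⁻¹ * App mu ν))
    (h₁ : IsUnit (blk₁ M).det)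
    (hS : blk₃ M = (blk₂ M + Ap lam mu ν)ᵀ * (blk₁ M)⁻¹ * (blk₂ M + Ap lam mu ν) ∧
      blk₃ M = (blk₂ M - Ap lam mu ν)ᵀ * (blk₁ M)⁻¹ * (blk₂ M - Ap lam mu ν)) :
    (Anu lam mu ν + M).rank = 3 ∧ (Anu lam mu ν - M).rank = 3 := by
  obtain ⟨h_add, h_sub⟩ := rank_add_and_rank_sub_of_eq_transpose_mul_mul
    (Anu_eq_transpose_mul_mul hC) hM (blockContraction_mul_blockInclusion _)
  rw [h_add, h_sub, symmBlocks_add_symmBlocks_zero, symmBlocks_sub_symmBlocks_zero,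
    rank_symmBlocks_of_eq h₁ hS.1, rank_symmBlocks_of_eq h₁ hS.2, Fintype.card_fin]
  exact ⟨rfl, rfl⟩

end Lame

theorem stmt9_general (lam mu : ℝ) (hmu : 0 < mu) (hlm : 0 < 2 * mu + 3 * lam) (ν : Fin 3 → ℝ)
    (hν0 : ∀ i : Fin 3, ν i ≠ 0)
    (M : Matrix I9 I9 ℝ) (hMsymm : M.IsSymm) :
    IsAdmissible (Anu lam mu ν) M ↔
      ((blk₁ M).PosDef ∧ (blk₃ M).PosDef) ∧
      (((Ap lam mu ν)ᵀ * (blk₁ M)⁻¹ * blk₂ M)ᵀ = -((Ap lam mu ν)ᵀ * (blk₁ M)⁻¹ * blk₂ M) ∧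
        (Ap lam mu ν * (blk₃ M)⁻¹ * (blk₂ M)ᵀ)ᵀ = -(Ap lam mu ν * (blk₃ M)⁻¹ * (blk₂ M)ᵀ)) ∧
      (blk₃ M = (Ap lam mu ν)ᵀ * (blk₁ M)⁻¹ * Ap lam mu ν + (blk₂ M)ᵀ * (blk₁ M)⁻¹ * blk₂ M ∧
        blk₁ M = Ap lam mu ν * (blk₃ M)⁻¹ * (Ap lam mu ν)ᵀ + blk₂ M * (blk₃ M)⁻¹ * (blk₂ M)ᵀ) ∧
      (blk₂' M = blk₂ M * (Ap lam mu ν)⁻¹ * App mu ν ∧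
        blk₃' M = blk₃ M * (Ap lam mu ν)⁻¹ * App mu ν ∧
        blk₃'' M = (App mu ν)ᵀ * ((Ap lam mu ν)⁻¹)ᵀ * blk₃ M * (Ap lam mu ν)⁻¹ * App mu ν) ∧
      ((Anu lam mu ν + M).rank = 3 ∧ (Anu lam mu ν - M).rank = 3) := by
  have hC := isUnit_det_Ap hmu hlm hν0
  rw [isAdmissible_Anu_iff hC hMsymm, posSemidef_and_ker_sup_eq_top_iff hC]
  constructor
  · rintro ⟨hMN, h₁, h₃, hS⟩
    obtain ⟨hb, hc⟩ := (eq_conj_add_and_eq_conj_sub_iff_of_posDef h₁ h₃).1 hS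
    exact ⟨⟨h₁, h₃⟩, hb, hc, (eq_blockContraction_transpose_mul_mul_iff hMsymm _ _).1 hMN,
      rank_Anu_add_and_sub hC hMN ((isUnit_iff_isUnit_det _).1 h₁.isUnit) hS⟩
  · rintro ⟨⟨h₁, h₃⟩, hb, hc, hd, -⟩
    exact ⟨(eq_blockContraction_transpose_mul_mul_iff hMsymm _ _).2 hd, h₁, h₃,
      (eq_conj_add_and_eq_conj_sub_iff_of_posDef h₁ h₃).2 ⟨hb, hc⟩⟩

theorem stmt9 (lam mu : ℝ) (hmu : 0 < mu) (hlm : 0 < 2 * mu + 3 * lam) (ν : Fin 3 → ℝ)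
    (hν : ν 0 ^ 2 + ν 1 ^ 2 + ν 2 ^ 2 = 1)
    (hν0 : ∀ i : Fin 3, ν i ≠ 0)
    (M : Matrix I9 I9 ℝ) (hMsymm : M.IsSymm) :
    IsAdmissible (Anu lam mu ν) M ↔
      ((blk₁ M).PosDef ∧ (blk₃ M).PosDef) ∧
      (((Ap lam mu ν)ᵀ * (blk₁ M)⁻¹ * blk₂ M)ᵀ = -((Ap lam mu ν)ᵀ * (blk₁ M)⁻¹ * blk₂ M) ∧
        (Ap lam mu ν * (blk₃ M)⁻¹ * (blk₂ M)ᵀ)ᵀ = -(Ap lam mu ν * (blk₃ M)⁻¹ * (blk₂ M)ᵀ)) ∧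
      (blk₃ M = (Ap lam mu ν)ᵀ * (blk₁ M)⁻¹ * Ap lam mu ν + (blk₂ M)ᵀ * (blk₁ M)⁻¹ * blk₂ M ∧
        blk₁ M = Ap lam mu ν * (blk₃ M)⁻¹ * (Ap lam mu ν)ᵀ + blk₂ M * (blk₃ M)⁻¹ * (blk₂ M)ᵀ) ∧
      (blk₂' M = blk₂ M * (Ap lam mu ν)⁻¹ * App mu ν ∧
        blk₃' M = blk₃ M * (Ap lam mu ν)⁻¹ * App mu ν ∧
        blk₃'' M = (App mu ν)ᵀ * ((Ap lam mu ν)⁻¹)ᵀ * blk₃ M * (Ap lam mu ν)⁻¹ * App mu ν) ∧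
      ((Anu lam mu ν + M).rank = 3 ∧ (Anu lam mu ν - M).rank = 3) :=
  stmt9_general lam mu hmu hlm ν hν0 M hMsymm
end

section
/- Let ν ∈ ℝ³ with |ν| = 1 and ν_i ≠ 0 for i = 1, 2, 3, and let M be a symmetric real 9×9 matrix. Then M is an admissible boundary matrix for A_ν if and only if there exist a symmetric positive definite real 3×3 matrix S₁ and a skew-symmetric real 3×3 matrix S₂ such that S₁ + S₂ and S₁ − S₂ are invertible and, for every v ∈ ℝ³ and every symmetric real 3×3 matrix σ, with U(v,σ) := (v, C̃^{−1/2} σ'_pr, μ^{−1/2} σ''_pr) ∈ ℝ⁹: (A_ν + M) · U(v,σ) = 0 if and only if (S₁ + S₂) v − σν = 0, and (A_ν − M) · U(v,σ) = 0 if and only if (S₁ − S₂) v + σν = 0. -/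
open Matrix

/-- The matrix `C̃^γ`, with diagonal entries `α_γ` and off-diagonal entries `β_γ`. -/
noncomputable def Cpow (lam mu γ : ℝ) : Matrix (Fin 3) (Fin 3) ℝ :=
  Matrix.of fun i j =>
    if i = j then (2 * (2 * mu) ^ γ + (2 * mu + 3 * lam) ^ γ) / 3
    else (- (2 * mu) ^ γ + (2 * mu + 3 * lam) ^ γ) / 3

/-- The vector `U(v,σ) = (v, C̃^{-1/2} σ'_pr, μ^{-1/2} σ''_pr) ∈ ℝ⁹`. -/
noncomputable def Uvec (lam mu : ℝ) (v : Fin 3 → ℝ) (σ : Matrix (Fin 3) (Fin 3) ℝ) : I9 → ℝ :=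
  Sum.elim v
    (Sum.elim ((Cpow lam mu (-(1/2))).mulVec ![σ 0 0, σ 1 1, σ 2 2])
      (fun i => mu ^ (-(1/2) : ℝ) * ![σ 0 1, σ 0 2, σ 1 2] i))

/-!
Write `A_ν = [[0, B], [Bᵀ, 0]]` with `B = (A'_ν | A''_ν)`, which is onto `ℝ³`, and read a
vector `x = (v, y)` through its Cauchy data `(v, B y)`: then `x ⬝ A_ν x = 2 v ⬝ B y`, `Ker A_ν`
consists of the vectors with vanishing Cauchy data, and `U(v, σ)` has Cauchy data `(v, -σ ν)`.
For an admissible `M`, positivity of `M` on `Ker (A_ν ± M)` makes both kernels transverse to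
`{v = 0}`; as they span, a dimension count shows that their Cauchy data are the graphs of
`v ↦ -T v` and `v ↦ T' v`. Symmetry of `M` gives `T' = Tᵀ`, positivity gives `v ⬝ T v > 0`
for `v ≠ 0`, and `S₁`, `S₂` are the symmetric and skew parts of `T`. Conversely, the two
graphs span because `S₁` is invertible, and on `Ker (A_ν + M) + Ker (A_ν - M)` the form
`x ⬝ M x` splits as `2 v₁ ⬝ S₁ v₁ + 2 v₂ ⬝ S₁ v₂`.
-/

open Module

namespace Submodule

variable {K V W : Type*} [Field K] [AddCommGroup V] [Module K V] [AddCommGroup W] [Module K W]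

theorem fst_comp_subtype_injective {G : Submodule K (V × W)} (hG : ∀ x ∈ G, x.1 = 0 → x.2 = 0) :
    Function.Injective (LinearMap.fst K V W ∘ₗ G.subtype) := by
  rw [← LinearMap.ker_eq_bot, eq_bot_iff]
  rintro ⟨x, hx⟩ h
  exact Subtype.ext (Prod.ext h (hG x hx h))

theorem exists_eq_graph_of_sup_eq_top [FiniteDimensional K V] {G₁ G₂ : Submodule K (V × V)}
    (hG₁ : ∀ x ∈ G₁, x.1 = 0 → x.2 = 0) (hG₂ : ∀ x ∈ G₂, x.1 = 0 → x.2 = 0)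
    (hsup : G₁ ⊔ G₂ = ⊤) : ∃ f : V →ₗ[K] V, G₁ = f.graph := by
  have hinj₁ := fst_comp_subtype_injective hG₁
  have hle₂ := LinearMap.finrank_le_finrank_of_injective (fst_comp_subtype_injective hG₂)
  have hsum := finrank_add_le_finrank_add_finrank G₁ G₂
  rw [hsup, finrank_top, finrank_prod] at hsum
  exact exists_eq_graph ⟨hinj₁, (LinearMap.injective_iff_surjective_of_finrank_eq_finrank
    (le_antisymm (LinearMap.finrank_le_finrank_of_injective hinj₁) (by omega))).1 hinj₁⟩

end Submodule

section SymmPart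

variable {n : Type*} [Fintype n]

lemma dotProduct_mulVec_eq_zero_of_transpose_eq_neg {S : Matrix n n ℝ} (hS : Sᵀ = -S)
    (p : n → ℝ) : p ⬝ᵥ S *ᵥ p = 0 := by
  have h := dotProduct_transpose_mulVec S p p
  rw [hS, neg_mulVec, dotProduct_neg] at h
  linarith

lemma posDef_half_smul_add_transpose {T : Matrix n n ℝ}
    (hT : ∀ p : n → ℝ, p ≠ 0 → 0 < p ⬝ᵥ T *ᵥ p) : ((1 / 2 : ℝ) • (T + Tᵀ)).PosDef := by
  refine .of_dotProduct_mulVec_pos ?_ fun p hp => ?_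
  · simp [isHermitian_iff_isSymm, IsSymm, add_comm]
  · simp only [star_trivial, smul_mulVec, add_mulVec, dotProduct_smul, dotProduct_add,
      dotProduct_transpose_mulVec, smul_eq_mul]
    linarith [hT p hp]

lemma isUnit_det_of_dotProduct_mulVec_pos [DecidableEq n] {T : Matrix n n ℝ}
    (hT : ∀ p : n → ℝ, p ≠ 0 → 0 < p ⬝ᵥ T *ᵥ p) : IsUnit T.det := by
  refine isUnit_iff_ne_zero.2 fun h => ?_
  obtain ⟨p, hp, hTp⟩ := exists_mulVec_eq_zero_iff.2 h
  simpa [hTp] using hT p hp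

end SymmPart

section KernelSplitting

variable {n : Type*} [Fintype n] {A M : Matrix n n ℝ} {x : n → ℝ}

lemma mulVec_eq_neg_of_add_mulVec_eq_zero (hx : (A + M) *ᵥ x = 0) : M *ᵥ x = -(A *ᵥ x) :=
  eq_neg_of_add_eq_zero_right (by rwa [← add_mulVec])

lemma mulVec_eq_of_sub_mulVec_eq_zero (hx : (A - M) *ᵥ x = 0) : M *ᵥ x = A *ᵥ x :=
  (sub_eq_zero.1 (by rwa [← sub_mulVec])).symm

lemma Matrix.IsSymm.dotProduct_mulVec_comm (hA : A.IsSymm) (x y : n → ℝ) :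
    x ⬝ᵥ A *ᵥ y = y ⬝ᵥ A *ᵥ x := by
  rw [dotProduct_mulVec, ← mulVec_transpose, hA.eq, dotProduct_comm]

end KernelSplitting

section BlockSystem

variable {m k : Type*} (B : Matrix m k ℝ)

lemma fromBlocks_zero_isSymm : (fromBlocks 0 B Bᵀ 0).IsSymm := by
  simp [IsSymm, fromBlocks_transpose]

variable [Fintype m] [Fintype k]

lemma dotProduct_fromBlocks_zero_mulVec (x y : m ⊕ k → ℝ) :
    x ⬝ᵥ fromBlocks 0 B Bᵀ 0 *ᵥ y =
      x ∘ Sum.inl ⬝ᵥ B *ᵥ (y ∘ Sum.inr) + B *ᵥ (x ∘ Sum.inr) ⬝ᵥ y ∘ Sum.inl := by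
  conv_lhs => rw [fromBlocks_mulVec, ← Sum.elim_comp_inl_inr x, sumElim_dotProduct_sumElim]
  simp [mulVec_transpose, dotProduct_mulVec, dotProduct_comm]

lemma dotProduct_fromBlocks_zero_mulVec_self (x : m ⊕ k → ℝ) :
    x ⬝ᵥ fromBlocks 0 B Bᵀ 0 *ᵥ x = 2 * (x ∘ Sum.inl ⬝ᵥ B *ᵥ (x ∘ Sum.inr)) := by
  rw [dotProduct_fromBlocks_zero_mulVec, dotProduct_comm (B *ᵥ _)]
  ring

variable {B}

lemma transpose_mulVec_injective (hB : Function.Surjective B.mulVec) :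
    Function.Injective Bᵀ.mulVec := by
  refine (injective_iff_map_eq_zero Bᵀ.mulVecLin).2 fun p hp => ?_
  obtain ⟨y, rfl⟩ := hB p
  rw [← dotProduct_self_eq_zero, dotProduct_mulVec, ← mulVec_transpose]
  exact (congrArg (· ⬝ᵥ y) hp).trans (zero_dotProduct y)

lemma fromBlocks_zero_mulVec_eq_zero_iff (hB : Function.Surjective B.mulVec) (x : m ⊕ k → ℝ) :
    fromBlocks 0 B Bᵀ 0 *ᵥ x = 0 ↔ x ∘ Sum.inl = 0 ∧ B *ᵥ (x ∘ Sum.inr) = 0 := by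
  rw [fromBlocks_mulVec, ← Sum.elim_zero_zero, Sum.elim_eq_iff]
  simp only [zero_mulVec, zero_add, add_zero]
  rw [(transpose_mulVec_injective hB).eq_iff' (mulVec_zero _), and_comm]

variable {M : Matrix (m ⊕ k) (m ⊕ k) ℝ} {x : m ⊕ k → ℝ}

lemma dotProduct_mulVec_of_add_mulVec_eq_zero (hx : (fromBlocks 0 B Bᵀ 0 + M) *ᵥ x = 0) :
    x ⬝ᵥ M *ᵥ x = -(2 * (x ∘ Sum.inl ⬝ᵥ B *ᵥ (x ∘ Sum.inr))) := by
  rw [mulVec_eq_neg_of_add_mulVec_eq_zero hx, dotProduct_neg,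
    dotProduct_fromBlocks_zero_mulVec_self]

lemma dotProduct_mulVec_of_sub_mulVec_eq_zero (hx : (fromBlocks 0 B Bᵀ 0 - M) *ᵥ x = 0) :
    x ⬝ᵥ M *ᵥ x = 2 * (x ∘ Sum.inl ⬝ᵥ B *ᵥ (x ∘ Sum.inr)) := by
  rw [mulVec_eq_of_sub_mulVec_eq_zero hx, dotProduct_fromBlocks_zero_mulVec_self]

lemma mulVec_eq_zero_of_comp_inl_eq_zero (hM : M.PosSemidef)
    (hx : (fromBlocks 0 B Bᵀ 0 + M) *ᵥ x = 0 ∨ (fromBlocks 0 B Bᵀ 0 - M) *ᵥ x = 0)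
    (h0 : x ∘ Sum.inl = 0) : fromBlocks 0 B Bᵀ 0 *ᵥ x = 0 := by
  have hMx : M *ᵥ x = 0 := by
    rw [← hM.dotProduct_mulVec_zero_iff, star_trivial]
    rcases hx with h | h
    · simp [dotProduct_mulVec_of_add_mulVec_eq_zero h, h0]
    · simp [dotProduct_mulVec_of_sub_mulVec_eq_zero h, h0]
  rcases hx with h | h
  · simpa [hMx] using mulVec_eq_neg_of_add_mulVec_eq_zero h
  · simpa [hMx] using (mulVec_eq_of_sub_mulVec_eq_zero h).symm

lemma exists_ker_add_eq_graph (hB : Function.Surjective B.mulVec) (hM : M.PosSemidef)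
    (hker : ∀ x, fromBlocks 0 B Bᵀ 0 *ᵥ x = 0 → M *ᵥ x = 0)
    (hsup : LinearMap.ker (fromBlocks 0 B Bᵀ 0 - M).mulVecLin ⊔
      LinearMap.ker (fromBlocks 0 B Bᵀ 0 + M).mulVecLin = ⊤) :
    ∃ T : Matrix m m ℝ, ∀ x, (fromBlocks 0 B Bᵀ 0 + M) *ᵥ x = 0 ↔
      T *ᵥ (x ∘ Sum.inl) + B *ᵥ (x ∘ Sum.inr) = 0 := by
  set A := fromBlocks 0 B Bᵀ 0
  let Φ : (m ⊕ k → ℝ) →ₗ[ℝ] (m → ℝ) × (m → ℝ) :=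
    (LinearMap.funLeft ℝ ℝ Sum.inl).prod (B.mulVecLin ∘ₗ LinearMap.funLeft ℝ ℝ Sum.inr)
  have hΦ : ∀ x, Φ x = (x ∘ Sum.inl, B *ᵥ (x ∘ Sum.inr)) := fun _ => rfl
  have hΦsurj : LinearMap.range Φ = ⊤ := by
    refine LinearMap.range_eq_top.2 fun ⟨p, q⟩ => ?_
    obtain ⟨y, rfl⟩ := hB q
    exact ⟨Sum.elim p y, by simp [hΦ]⟩
  have vertical : ∀ K : Submodule ℝ (m ⊕ k → ℝ),
      (∀ x ∈ K, (A + M) *ᵥ x = 0 ∨ (A - M) *ᵥ x = 0) → ∀ y ∈ K.map Φ, y.1 = 0 → y.2 = 0 := by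
    rintro K hK _ ⟨x, hx, rfl⟩ h0
    exact ((fromBlocks_zero_mulVec_eq_zero_iff hB x).1
      (mulVec_eq_zero_of_comp_inl_eq_zero hM (hK x hx) h0)).2
  obtain ⟨f, hf⟩ := Submodule.exists_eq_graph_of_sup_eq_top
    (vertical _ fun x hx => .inl hx) (vertical _ fun x hx => .inr hx)
    (by rw [← Submodule.map_sup, sup_comm, hsup, Submodule.map_top, hΦsurj])
  have hle : LinearMap.ker Φ ≤ LinearMap.ker (A + M).mulVecLin := fun x hx => by
    have hAx := (fromBlocks_zero_mulVec_eq_zero_iff hB x).2 (by simpa [hΦ] using hx)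
    rw [LinearMap.mem_ker, mulVecLin_apply, add_mulVec, hAx, hker x hAx, add_zero]
  classical
  refine ⟨-LinearMap.toMatrix' f, fun x => ?_⟩
  rw [← Matrix.mulVecLin_apply, ← LinearMap.mem_ker, ← sup_of_le_left hle,
    ← Submodule.comap_map_eq, Submodule.mem_comap, hf, LinearMap.mem_graph_iff, hΦ, neg_mulVec,
    LinearMap.toMatrix'_mulVec, neg_add_eq_zero, eq_comm]

lemma exists_ker_sub_eq_graph (hB : Function.Surjective B.mulVec) (hM : M.PosSemidef)
    (hker : ∀ x, fromBlocks 0 B Bᵀ 0 *ᵥ x = 0 → M *ᵥ x = 0)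
    (hsup : LinearMap.ker (fromBlocks 0 B Bᵀ 0 - M).mulVecLin ⊔
      LinearMap.ker (fromBlocks 0 B Bᵀ 0 + M).mulVecLin = ⊤) :
    ∃ T : Matrix m m ℝ, ∀ x, (fromBlocks 0 B Bᵀ 0 - M) *ᵥ x = 0 ↔
      T *ᵥ (x ∘ Sum.inl) - B *ᵥ (x ∘ Sum.inr) = 0 := by
  -- `Ker (A - M)` for `B` is `Ker (A + M)` for `-B`.
  have hneg : fromBlocks 0 (-B) (-B)ᵀ 0 = -fromBlocks 0 B Bᵀ 0 := by
    simp [fromBlocks_neg]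
  have hsup' : LinearMap.ker (fromBlocks 0 (-B) (-B)ᵀ 0 - M).mulVecLin ⊔
      LinearMap.ker (fromBlocks 0 (-B) (-B)ᵀ 0 + M).mulVecLin = ⊤ := by
    have hker_neg (N : Matrix (m ⊕ k) (m ⊕ k) ℝ) :
        LinearMap.ker (-N).mulVecLin = LinearMap.ker N.mulVecLin := by
      ext x; simp
    rwa [hneg, ← neg_add', neg_add_eq_sub, ← neg_sub, hker_neg, hker_neg, sup_comm]
  obtain ⟨T, hT⟩ := exists_ker_add_eq_graph
    (fun q => (hB (-q)).imp fun y hy => by rw [neg_mulVec, hy, neg_neg]) hM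
    (fun x hx => hker x (by rwa [hneg, neg_mulVec, neg_eq_zero] at hx)) hsup'
  refine ⟨T, fun x => ?_⟩
  rw [← neg_eq_zero, ← neg_mulVec, neg_sub, ← neg_add_eq_sub, ← hneg, hT, neg_mulVec,
    sub_eq_add_neg]

lemma dotProduct_mulVec_pos_of_ker_add (hB : Function.Surjective B.mulVec) (hM : M.PosSemidef)
    {T : Matrix m m ℝ} (hT : ∀ x, (fromBlocks 0 B Bᵀ 0 + M) *ᵥ x = 0 ↔
      T *ᵥ (x ∘ Sum.inl) + B *ᵥ (x ∘ Sum.inr) = 0) {p : m → ℝ} (hp : p ≠ 0) :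
    0 < p ⬝ᵥ T *ᵥ p := by
  obtain ⟨y, hy⟩ := hB (-(T *ᵥ p))
  have hx : (fromBlocks 0 B Bᵀ 0 + M) *ᵥ Sum.elim p y = 0 := (hT _).2 (by simp [hy])
  have hquad : Sum.elim p y ⬝ᵥ M *ᵥ Sum.elim p y = 2 * (p ⬝ᵥ T *ᵥ p) := by
    simp [dotProduct_mulVec_of_add_mulVec_eq_zero hx, hy]
  refine lt_of_le_of_ne (by simpa [hquad] using hM.dotProduct_mulVec_nonneg (Sum.elim p y))
    fun h => hp ?_
  have hM0 : M *ᵥ Sum.elim p y = 0 := by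
    rw [← hM.dotProduct_mulVec_zero_iff, star_trivial, hquad, ← h, mul_zero]
  have hA : fromBlocks 0 B Bᵀ 0 *ᵥ Sum.elim p y = 0 := by
    simpa [hM0] using mulVec_eq_neg_of_add_mulVec_eq_zero hx
  simpa using ((fromBlocks_zero_mulVec_eq_zero_iff hB _).1 hA).1

lemma eq_transpose_of_ker_add_of_ker_sub (hB : Function.Surjective B.mulVec) (hM : M.IsSymm)
    {T T' : Matrix m m ℝ}
    (hT : ∀ x, (fromBlocks 0 B Bᵀ 0 + M) *ᵥ x = 0 ↔
      T *ᵥ (x ∘ Sum.inl) + B *ᵥ (x ∘ Sum.inr) = 0)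
    (hT' : ∀ x, (fromBlocks 0 B Bᵀ 0 - M) *ᵥ x = 0 ↔
      T' *ᵥ (x ∘ Sum.inl) - B *ᵥ (x ∘ Sum.inr) = 0) :
    T' = Tᵀ := by
  refine ext_iff_mulVec.2 fun p' => dotProduct_eq _ _ fun p => ?_
  obtain ⟨y, hy⟩ := hB (-(T *ᵥ p))
  obtain ⟨y', hy'⟩ := hB (T' *ᵥ p')
  have hx : (fromBlocks 0 B Bᵀ 0 + M) *ᵥ Sum.elim p y = 0 := (hT _).2 (by simp [hy])
  have hz : (fromBlocks 0 B Bᵀ 0 - M) *ᵥ Sum.elim p' y' = 0 := (hT' _).2 (by simp [hy'])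
  have horth : Sum.elim p' y' ⬝ᵥ fromBlocks 0 B Bᵀ 0 *ᵥ Sum.elim p y = 0 := by
    have := hM.dotProduct_mulVec_comm (Sum.elim p' y') (Sum.elim p y)
    rw [mulVec_eq_neg_of_add_mulVec_eq_zero hx, mulVec_eq_of_sub_mulVec_eq_zero hz,
      (fromBlocks_zero_isSymm B).dotProduct_mulVec_comm (Sum.elim p y), dotProduct_neg] at this
    linarith
  simp only [dotProduct_fromBlocks_zero_mulVec, Sum.elim_comp_inl, Sum.elim_comp_inr, hy, hy',
    dotProduct_neg] at horth
  rw [mulVec_transpose, ← dotProduct_mulVec]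
  linarith

theorem exists_posDef_of_admissible [DecidableEq m] (hB : Function.Surjective B.mulVec)
    (hMsymm : M.IsSymm) (hM : M.PosSemidef)
    (hker : ∀ x, fromBlocks 0 B Bᵀ 0 *ᵥ x = 0 → M *ᵥ x = 0)
    (hsup : LinearMap.ker (fromBlocks 0 B Bᵀ 0 - M).mulVecLin ⊔
      LinearMap.ker (fromBlocks 0 B Bᵀ 0 + M).mulVecLin = ⊤) :
    ∃ S₁ S₂ : Matrix m m ℝ, S₁.PosDef ∧ S₂ᵀ = -S₂ ∧ IsUnit (S₁ + S₂).det ∧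
      IsUnit (S₁ - S₂).det ∧ ∀ x,
        ((fromBlocks 0 B Bᵀ 0 + M) *ᵥ x = 0 ↔
          (S₁ + S₂) *ᵥ (x ∘ Sum.inl) + B *ᵥ (x ∘ Sum.inr) = 0) ∧
        ((fromBlocks 0 B Bᵀ 0 - M) *ᵥ x = 0 ↔
          (S₁ - S₂) *ᵥ (x ∘ Sum.inl) - B *ᵥ (x ∘ Sum.inr) = 0) := by
  obtain ⟨T, hT⟩ := exists_ker_add_eq_graph hB hM hker hsup
  obtain ⟨T', hT'⟩ := exists_ker_sub_eq_graph hB hM hker hsup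
  obtain rfl : T' = Tᵀ := eq_transpose_of_ker_add_of_ker_sub hB hMsymm hT hT'
  have hpos : ∀ p : m → ℝ, p ≠ 0 → 0 < p ⬝ᵥ T *ᵥ p := fun _ =>
    dotProduct_mulVec_pos_of_ker_add hB hM hT
  have hadd : (1 / 2 : ℝ) • (T + Tᵀ) + (1 / 2 : ℝ) • (T - Tᵀ) = T := by module
  have hsub : (1 / 2 : ℝ) • (T + Tᵀ) - (1 / 2 : ℝ) • (T - Tᵀ) = Tᵀ := by module
  refine ⟨(1 / 2 : ℝ) • (T + Tᵀ), (1 / 2 : ℝ) • (T - Tᵀ), posDef_half_smul_add_transpose hpos,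
    ?_, ?_, ?_, fun x => ?_⟩
  · rw [transpose_smul, transpose_sub, transpose_transpose, ← neg_sub, smul_neg]
  · rw [hadd]
    exact isUnit_det_of_dotProduct_mulVec_pos hpos
  · rw [hsub, det_transpose]
    exact isUnit_det_of_dotProduct_mulVec_pos hpos
  · rw [hadd, hsub]
    exact ⟨hT x, hT' x⟩

lemma exists_add_eq_of_isUnit [DecidableEq m] (hB : Function.Surjective B.mulVec)
    {S₁ S₂ : Matrix m m ℝ} (hS₁ : IsUnit S₁)
    (H : ∀ x, ((S₁ + S₂) *ᵥ (x ∘ Sum.inl) + B *ᵥ (x ∘ Sum.inr) = 0 →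
          (fromBlocks 0 B Bᵀ 0 + M) *ᵥ x = 0) ∧
        ((S₁ - S₂) *ᵥ (x ∘ Sum.inl) - B *ᵥ (x ∘ Sum.inr) = 0 →
          (fromBlocks 0 B Bᵀ 0 - M) *ᵥ x = 0)) (x : m ⊕ k → ℝ) :
    ∃ x₁ x₂, x₁ + x₂ = x ∧ (fromBlocks 0 B Bᵀ 0 + M) *ᵥ x₁ = 0 ∧
      (fromBlocks 0 B Bᵀ 0 - M) *ᵥ x₂ = 0 := by
  obtain ⟨r, hr⟩ := mulVec_surjective_iff_isUnit.2 hS₁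
    ((S₁ - S₂) *ᵥ (x ∘ Sum.inl) - B *ᵥ (x ∘ Sum.inr))
  obtain ⟨y, hy⟩ := hB (-((S₁ + S₂) *ᵥ ((1 / 2 : ℝ) • r)))
  refine ⟨Sum.elim ((1 / 2 : ℝ) • r) y, _, add_sub_cancel _ x, (H _).1 (by simp [hy]),
    (H _).2 ?_⟩
  simp only [Pi.sub_comp, Sum.elim_comp_inl, Sum.elim_comp_inr, mulVec_sub, sub_mulVec,
    add_mulVec, mulVec_smul, hy] at hr ⊢
  linear_combination (norm := module) -hr

theorem admissible_of_posDef (hB : Function.Surjective B.mulVec) (hMsymm : M.IsSymm)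
    {S₁ S₂ : Matrix m m ℝ} (hS₁ : S₁.PosDef) (hS₂ : S₂ᵀ = -S₂)
    (H : ∀ x, ((fromBlocks 0 B Bᵀ 0 + M) *ᵥ x = 0 ↔
          (S₁ + S₂) *ᵥ (x ∘ Sum.inl) + B *ᵥ (x ∘ Sum.inr) = 0) ∧
        ((fromBlocks 0 B Bᵀ 0 - M) *ᵥ x = 0 ↔
          (S₁ - S₂) *ᵥ (x ∘ Sum.inl) - B *ᵥ (x ∘ Sum.inr) = 0)) :
    M.PosSemidef ∧ (∀ x, fromBlocks 0 B Bᵀ 0 *ᵥ x = 0 → M *ᵥ x = 0) ∧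
      LinearMap.ker (fromBlocks 0 B Bᵀ 0 - M).mulVecLin ⊔
        LinearMap.ker (fromBlocks 0 B Bᵀ 0 + M).mulVecLin = ⊤ := by
  classical
  have hdecomp := exists_add_eq_of_isUnit hB hS₁.isUnit fun x => ⟨(H x).1.2, (H x).2.2⟩
  have hquad_add : ∀ x, (fromBlocks 0 B Bᵀ 0 + M) *ᵥ x = 0 →
      x ⬝ᵥ M *ᵥ x = 2 * (x ∘ Sum.inl ⬝ᵥ S₁ *ᵥ (x ∘ Sum.inl)) := fun x hx => by
    rw [dotProduct_mulVec_of_add_mulVec_eq_zero hx,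
      eq_neg_of_add_eq_zero_right ((H x).1.1 hx), dotProduct_neg, add_mulVec, dotProduct_add,
      dotProduct_mulVec_eq_zero_of_transpose_eq_neg hS₂]
    ring
  have hquad_sub : ∀ x, (fromBlocks 0 B Bᵀ 0 - M) *ᵥ x = 0 →
      x ⬝ᵥ M *ᵥ x = 2 * (x ∘ Sum.inl ⬝ᵥ S₁ *ᵥ (x ∘ Sum.inl)) := fun x hx => by
    rw [dotProduct_mulVec_of_sub_mulVec_eq_zero hx, ← sub_eq_zero.1 ((H x).2.1 hx), sub_mulVec,
      dotProduct_sub, dotProduct_mulVec_eq_zero_of_transpose_eq_neg hS₂, sub_zero]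
  refine ⟨.of_dotProduct_mulVec_nonneg (isHermitian_iff_isSymm.2 hMsymm) fun x => ?_,
    fun x hx => ?_, eq_top_iff.2 fun x _ => ?_⟩
  · obtain ⟨x₁, x₂, rfl, h₁, h₂⟩ := hdecomp x
    have hcross : x₁ ⬝ᵥ M *ᵥ x₂ + x₂ ⬝ᵥ M *ᵥ x₁ = 0 := by
      rw [mulVec_eq_of_sub_mulVec_eq_zero h₂, mulVec_eq_neg_of_add_mulVec_eq_zero h₁,
        dotProduct_neg, (fromBlocks_zero_isSymm B).dotProduct_mulVec_comm x₁, add_neg_cancel]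
    have hexp : (x₁ + x₂) ⬝ᵥ M *ᵥ (x₁ + x₂) = x₁ ⬝ᵥ M *ᵥ x₁ + x₂ ⬝ᵥ M *ᵥ x₂ +
        (x₁ ⬝ᵥ M *ᵥ x₂ + x₂ ⬝ᵥ M *ᵥ x₁) := by
      rw [mulVec_add, add_dotProduct, dotProduct_add, dotProduct_add]
      ring
    rw [star_trivial, hexp, hcross, add_zero, hquad_add x₁ h₁, hquad_sub x₂ h₂]
    have := hS₁.posSemidef.dotProduct_mulVec_nonneg
    simp only [star_trivial] at this
    linarith [this (x₁ ∘ Sum.inl), this (x₂ ∘ Sum.inl)]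
  · obtain ⟨h0, hB0⟩ := (fromBlocks_zero_mulVec_eq_zero_iff hB x).1 hx
    simpa [add_mulVec, hx] using (H x).1.2 (by simp [h0, hB0])
  · obtain ⟨x₁, x₂, rfl, h₁, h₂⟩ := hdecomp x
    rw [add_comm x₁]
    exact Submodule.add_mem_sup (LinearMap.mem_ker.2 h₂) (LinearMap.mem_ker.2 h₁)

theorem fromBlocks_zero_admissible_iff [DecidableEq m] (hB : Function.Surjective B.mulVec)
    (hMsymm : M.IsSymm) :
    (M.PosSemidef ∧ (∀ x, fromBlocks 0 B Bᵀ 0 *ᵥ x = 0 → M *ᵥ x = 0) ∧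
      LinearMap.ker (fromBlocks 0 B Bᵀ 0 - M).mulVecLin ⊔
        LinearMap.ker (fromBlocks 0 B Bᵀ 0 + M).mulVecLin = ⊤) ↔
    ∃ S₁ S₂ : Matrix m m ℝ, S₁.PosDef ∧ S₂ᵀ = -S₂ ∧ IsUnit (S₁ + S₂).det ∧
      IsUnit (S₁ - S₂).det ∧ ∀ x,
        ((fromBlocks 0 B Bᵀ 0 + M) *ᵥ x = 0 ↔
          (S₁ + S₂) *ᵥ (x ∘ Sum.inl) + B *ᵥ (x ∘ Sum.inr) = 0) ∧
        ((fromBlocks 0 B Bᵀ 0 - M) *ᵥ x = 0 ↔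
          (S₁ - S₂) *ᵥ (x ∘ Sum.inl) - B *ᵥ (x ∘ Sum.inr) = 0) :=
  ⟨fun ⟨hM, hker, hsup⟩ => exists_posDef_of_admissible hB hMsymm hM hker hsup,
    fun ⟨_, _, hS₁, hS₂, _, _, H⟩ => admissible_of_posDef hB hMsymm hS₁ hS₂ H⟩

end BlockSystem

section Elasticity

variable {lam mu : ℝ}

lemma Cpow_mul_Cpow (hmu : 0 < mu) (hlm : 0 < 2 * mu + 3 * lam) (γ δ : ℝ) :
    Cpow lam mu γ * Cpow lam mu δ = Cpow lam mu (γ + δ) := by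
  have h₁ := Real.rpow_add (by linarith : 0 < 2 * mu) γ δ
  have h₂ := Real.rpow_add hlm γ δ
  ext i j
  fin_cases i <;> fin_cases j <;> simp [Cpow, mul_apply, Fin.sum_univ_three, h₁, h₂] <;> ring

lemma Cpow_zero (lam mu : ℝ) : Cpow lam mu 0 = 1 := by
  ext i j
  fin_cases i <;> fin_cases j <;> norm_num [Cpow]

lemma Ap_eq (lam mu : ℝ) (ν : Fin 3 → ℝ) :
    Ap lam mu ν = -(diagonal ν * Cpow lam mu (1 / 2)) := by
  ext i j
  fin_cases i <;> fin_cases j <;> simp [Ap, Cpow, alph, bet, Real.sqrt_eq_rpow]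

lemma Ap_mul_Cpow (hmu : 0 < mu) (hlm : 0 < 2 * mu + 3 * lam) (ν : Fin 3 → ℝ) :
    Ap lam mu ν * Cpow lam mu (-(1 / 2)) = -diagonal ν := by
  rw [Ap_eq, Matrix.neg_mul, Matrix.mul_assoc, Cpow_mul_Cpow hmu hlm, add_neg_cancel, Cpow_zero,
    Matrix.mul_one]

lemma sqrt_mul_rpow_neg_half (hmu : 0 < mu) : Real.sqrt mu * mu ^ (-(1 / 2) : ℝ) = 1 := by
  rw [Real.sqrt_eq_rpow, ← Real.rpow_add hmu, add_neg_cancel, Real.rpow_zero]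

lemma Anu_eq (lam mu : ℝ) (ν : Fin 3 → ℝ) :
    Anu lam mu ν = fromBlocks 0 (fromCols (Ap lam mu ν) (App mu ν))
      (fromCols (Ap lam mu ν) (App mu ν))ᵀ 0 := by
  rw [Anu, transpose_fromCols]

@[simp]
lemma Uvec_comp_inl (v : Fin 3 → ℝ) (σ : Matrix (Fin 3) (Fin 3) ℝ) :
    Uvec lam mu v σ ∘ Sum.inl = v := rfl

lemma fromCols_mulVec_Uvec_comp_inr (hmu : 0 < mu) (hlm : 0 < 2 * mu + 3 * lam)
    (ν v : Fin 3 → ℝ) {σ : Matrix (Fin 3) (Fin 3) ℝ} (hσ : σ.IsSymm) :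
    fromCols (Ap lam mu ν) (App mu ν) *ᵥ (Uvec lam mu v σ ∘ Sum.inr) = -(σ *ᵥ ν) := by
  change fromCols _ _ *ᵥ Sum.elim _ ((mu ^ (-(1 / 2) : ℝ)) • ![σ 0 1, σ 0 2, σ 1 2]) = _
  rw [fromCols_mulVec_sumElim, mulVec_mulVec, Ap_mul_Cpow hmu hlm, App, smul_mulVec,
    mulVec_smul, smul_smul, neg_mul, sqrt_mul_rpow_neg_half hmu]
  have h₁₀ : σ 1 0 = σ 0 1 := hσ.apply 0 1
  have h₂₀ : σ 2 0 = σ 0 2 := hσ.apply 0 2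
  have h₂₁ : σ 2 1 = σ 1 2 := hσ.apply 1 2
  ext i
  fin_cases i <;> simp [mulVec, dotProduct, Fin.sum_univ_three, h₁₀, h₂₀, h₂₁] <;> ring

lemma exists_isSymm_mulVec_eq {n : Type*} [Fintype n] {ν : n → ℝ} (hν : ν ⬝ᵥ ν = 1)
    (w : n → ℝ) : ∃ σ : Matrix n n ℝ, σ.IsSymm ∧ σ *ᵥ ν = w := by
  refine ⟨vecMulVec w ν + vecMulVec ν w - (ν ⬝ᵥ w) • vecMulVec ν ν, ?_, ?_⟩
  · simp [IsSymm, transpose_vecMulVec, add_comm]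
  · simp [sub_mulVec, add_mulVec, smul_mulVec, vecMulVec_mulVec, hν, dotProduct_comm w]

lemma fromCols_Ap_App_mulVec_surjective (hmu : 0 < mu) (hlm : 0 < 2 * mu + 3 * lam)
    {ν : Fin 3 → ℝ} (hν : ν ⬝ᵥ ν = 1) :
    Function.Surjective (fromCols (Ap lam mu ν) (App mu ν)).mulVec := fun w => by
  obtain ⟨σ, hσ, hσν⟩ := exists_isSymm_mulVec_eq hν (-w)
  exact ⟨Uvec lam mu 0 σ ∘ Sum.inr,
    by rw [fromCols_mulVec_Uvec_comp_inr hmu hlm ν 0 hσ, hσν, neg_neg]⟩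

lemma Uvec_surjective (hmu : 0 < mu) (hlm : 0 < 2 * mu + 3 * lam) (x : I9 → ℝ) :
    ∃ v σ, σ.IsSymm ∧ Uvec lam mu v σ = x := by
  set p := Cpow lam mu (1 / 2) *ᵥ (x ∘ Sum.inr ∘ Sum.inl)
  set q := Real.sqrt mu • (x ∘ Sum.inr ∘ Sum.inr)
  refine ⟨x ∘ Sum.inl, !![p 0, q 0, q 1; q 0, p 1, q 2; q 1, q 2, p 2], ?_, ?_⟩
  · ext i j
    fin_cases i <;> fin_cases j <;> rfl
  · have hp : ![p 0, p 1, p 2] = p := by ext i; fin_cases i <;> rfl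
    have hq : ![q 0, q 1, q 2] = q := by ext i; fin_cases i <;> rfl
    ext (i | i | i)
    · rfl
    · change (Cpow lam mu (-(1 / 2)) *ᵥ ![p 0, p 1, p 2]) i = _
      rw [hp, mulVec_mulVec, Cpow_mul_Cpow hmu hlm, neg_add_cancel, Cpow_zero, one_mulVec]
      rfl
    · change mu ^ (-(1 / 2) : ℝ) * ![q 0, q 1, q 2] i = _
      rw [hq]
      change _ * (Real.sqrt mu * _) = _
      rw [← mul_assoc, mul_comm _ (Real.sqrt mu), sqrt_mul_rpow_neg_half hmu, one_mul]
      rfl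

end Elasticity

theorem stmt11_general (lam mu : ℝ) (hmu : 0 < mu) (hlm : 0 < 2 * mu + 3 * lam) (ν : Fin 3 → ℝ)
    (hν : ν 0 ^ 2 + ν 1 ^ 2 + ν 2 ^ 2 = 1)
    (M : Matrix I9 I9 ℝ) (hMsymm : M.IsSymm) :
    IsAdmissible (Anu lam mu ν) M ↔
      ∃ S₁ S₂ : Matrix (Fin 3) (Fin 3) ℝ, S₁.PosDef ∧ S₂ᵀ = -S₂ ∧
        IsUnit (S₁ + S₂).det ∧ IsUnit (S₁ - S₂).det ∧
        ∀ (v : Fin 3 → ℝ) (σ : Matrix (Fin 3) (Fin 3) ℝ), σ.IsSymm →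
          ((Anu lam mu ν + M).mulVec (Uvec lam mu v σ) = 0 ↔
              (S₁ + S₂).mulVec v - σ.mulVec ν = 0) ∧
          ((Anu lam mu ν - M).mulVec (Uvec lam mu v σ) = 0 ↔
              (S₁ - S₂).mulVec v + σ.mulVec ν = 0) := by
  have hνν : ν ⬝ᵥ ν = 1 := by simpa [dotProduct, Fin.sum_univ_three, sq] using hν
  rw [IsAdmissible, and_iff_right hMsymm, Anu_eq, fromBlocks_zero_admissible_iff
    (fromCols_Ap_App_mulVec_surjective hmu hlm hνν) hMsymm]
  refine exists₂_congr fun S₁ S₂ => and_congr_right' <| and_congr_right' <| and_congr_right' <|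
    and_congr_right' ⟨fun H v σ hσ => ?_, fun H x => ?_⟩
  · simpa [fromCols_mulVec_Uvec_comp_inr hmu hlm ν v hσ, ← sub_eq_add_neg]
      using H (Uvec lam mu v σ)
  · obtain ⟨v, σ, hσ, rfl⟩ := Uvec_surjective hmu hlm x
    simpa [fromCols_mulVec_Uvec_comp_inr hmu hlm ν v hσ, ← sub_eq_add_neg] using H v σ hσ

theorem stmt11 (lam mu : ℝ) (hmu : 0 < mu) (hlm : 0 < 2 * mu + 3 * lam) (ν : Fin 3 → ℝ)
    (hν : ν 0 ^ 2 + ν 1 ^ 2 + ν 2 ^ 2 = 1)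
    (hν0 : ∀ i : Fin 3, ν i ≠ 0)
    (M : Matrix I9 I9 ℝ) (hMsymm : M.IsSymm) :
    IsAdmissible (Anu lam mu ν) M ↔
      ∃ S₁ S₂ : Matrix (Fin 3) (Fin 3) ℝ, S₁.PosDef ∧ S₂ᵀ = -S₂ ∧
        IsUnit (S₁ + S₂).det ∧ IsUnit (S₁ - S₂).det ∧
        ∀ (v : Fin 3 → ℝ) (σ : Matrix (Fin 3) (Fin 3) ℝ), σ.IsSymm →
          ((Anu lam mu ν + M).mulVec (Uvec lam mu v σ) = 0 ↔
              (S₁ + S₂).mulVec v - σ.mulVec ν = 0) ∧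
          ((Anu lam mu ν - M).mulVec (Uvec lam mu v σ) = 0 ↔
              (S₁ - S₂).mulVec v + σ.mulVec ν = 0) :=
  stmt11_general lam mu hmu hlm ν hν M hMsymm
end
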